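/- In the free left distributive magma on one generator, the relation <_L is irreflexive; equivalently, no element a satisfies a = (...((a·b_1)·b_2)...)·b_n for any n ≥ 1 and elements b_1, ..., b_n. -/

import Mathlib

/-- Equivalence of terms under the left distributive law. -/
inductive LDRel : FreeMagma Unit → FreeMagma Unit → Prop
  | ld : ∀ a b c, LDRel (a * (b * c)) ((a * b) * (a * c))
  | refl : ∀ a, LDRel a a
  | symm : ∀ {a b}, LDRel a b → LDRel b a
  | trans : ∀ {a b c}, LDRel a b → LDRel b c → LDRel a c
  | mul_congr : ∀ {a b c d}, LDRel a b → LDRel c d → LDRel (a * c) (b * d)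

/-- The free left distributive magma on one generator. -/
def FreeLD : Type := Quot LDRel

/-- Multiplication on the free left distributive magma. -/
def FreeLD.mul : FreeLD → FreeLD → FreeLD :=
  Quot.map₂ (· * ·) (fun a _ _ h => LDRel.mul_congr (LDRel.refl a) h)
    (fun _ _ b h => LDRel.mul_congr h (LDRel.refl b))

/-- The generator `x` of the free left distributive magma. -/
def FreeLD.x : FreeLD := Quot.mk _ (FreeMagma.of ())

/-- `LtL mul u w` : `w = (...((u·c₁)·c₂)...)·cₙ` for some `n ≥ 1`. -/
def LtL {M : Type*} (mul : M → M → M) (u w : M) : Prop :=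
  ∃ l : List M, l ≠ [] ∧ w = l.foldl mul u

/-!
Dehornoy's argument, with Larue's lemma. Let the braid group act on the free group
`F = ⟨x₀, x₁, …⟩` by automorphisms: `sh` shifts an automorphism to the generators `x₁, x₂, …`
(fixing `x₀`) and `σ` is the first Artin generator. Then `a ▷ b = a · sh(b) · σ · sh(a)⁻¹` is left
distributive, so `FreeLD` maps into `(Aut F, ▷)`, and `a = (…(a ▷ b₁) ▷ …) ▷ bₙ` makes `1 = a⁻¹a` a
product of elements `sh(e) · σ · sh(f)`. Such a σ-positive automorphism is never the identity:
shifted automorphisms preserve the first letter of a reduced word when it is `x₀^{±1}`, and `σ`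
turns such a first letter into `x₀`, so `x₀⁻¹` is sent to a word starting with `x₀`.
-/

section LeftDistributive

variable {M N : Type*}

theorem LtL.map {mul : M → M → M} {op : N → N → N} (f : M → N)
    (hf : ∀ a b, f (mul a b) = op (f a) (f b)) {u w : M} (h : LtL mul u w) :
    LtL op (f u) (f w) := by
  obtain ⟨l, hl, rfl⟩ := h
  refine ⟨l.map f, by simpa using hl, ?_⟩
  rw [List.foldl_map, List.foldl_hom f fun x y => (hf x y).symm]

variable (op : M → M → M) (m : M)

def FreeLD.liftTerm : FreeMagma Unit → M
  | .of _ => m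
  | .mul u v => op (liftTerm u) (liftTerm v)

variable {op}

theorem FreeLD.liftTerm_eq_of_ldRel (hld : ∀ a b c, op a (op b c) = op (op a b) (op a c))
    {u v : FreeMagma Unit} (h : LDRel u v) : liftTerm op m u = liftTerm op m v := by
  induction h with
  | ld a b c => exact hld _ _ _
  | refl => rfl
  | symm _ ih => exact ih.symm
  | trans _ _ ih₁ ih₂ => exact ih₁.trans ih₂
  | mul_congr _ _ ih₁ ih₂ => exact congrArg₂ op ih₁ ih₂

def FreeLD.lift (hld : ∀ a b c, op a (op b c) = op (op a b) (op a c)) : FreeLD → M :=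
  Quot.lift (liftTerm op m) fun _ _ => liftTerm_eq_of_ldRel m hld

theorem FreeLD.lift_mul (hld : ∀ a b c, op a (op b c) = op (op a b) (op a c)) (u v : FreeLD) :
    lift m hld (FreeLD.mul u v) = op (lift m hld u) (lift m hld v) := by
  induction u using Quot.ind
  induction v using Quot.ind
  rfl

end LeftDistributive

section ShiftedConj

variable {G : Type*} [Group G] (s : G →* G) (σ : G)

def shiftedConj (a b : G) : G := a * s b * σ * (s a)⁻¹

theorem shiftedConj_left_distrib (hcomm : ∀ z, Commute σ (s (s z)))
    (hbraid : σ * s σ * σ = s σ * σ * s σ) (a b c : G) :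
    shiftedConj s σ a (shiftedConj s σ b c) =
      shiftedConj s σ (shiftedConj s σ a b) (shiftedConj s σ a c) := by
  symm
  calc shiftedConj s σ (shiftedConj s σ a b) (shiftedConj s σ a c)
      = a * s b * (σ * s (s c)) * s σ * ((s (s a))⁻¹ * (σ * s (s a))) * (s σ)⁻¹ *
          (s (s b))⁻¹ * (s a)⁻¹ := by
        simp only [shiftedConj, map_mul, map_inv]; group
    _ = a * s b * s (s c) * (σ * s σ * σ) * (s σ)⁻¹ * (s (s b))⁻¹ * (s a)⁻¹ := by
        rw [(hcomm c).eq, (hcomm a).eq]; group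
    _ = a * s b * s (s c) * s σ * (σ * (s (s b))⁻¹) * (s a)⁻¹ := by
        rw [hbraid]; group
    _ = shiftedConj s σ a (shiftedConj s σ b c) := by
        rw [(hcomm b).inv_right.eq]; simp only [shiftedConj, map_mul, map_inv]; group

def sigmaPositive : Subsemigroup G := Subsemigroup.closure {x | ∃ e f, x = s e * σ * s f}

theorem inv_mul_foldl_mem_sigmaPositive (a c : G) (cs : List G) :
    a⁻¹ * (c :: cs).foldl (shiftedConj s σ) a ∈ sigmaPositive s σ := by
  have hstep (a c : G) : a⁻¹ * shiftedConj s σ a c ∈ sigmaPositive s σ :=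
    Subsemigroup.subset_closure ⟨c, a⁻¹, by simp only [shiftedConj, map_inv]; group⟩
  induction cs generalizing a c with
  | nil => exact hstep a c
  | cons c' cs ih =>
    have := mul_mem (hstep a c) (ih (shiftedConj s σ a c) c')
    rw [mul_assoc, mul_inv_cancel_left] at this
    exact this

theorem LtL.inv_mul_mem_sigmaPositive {a w : G} (h : LtL (shiftedConj s σ) a w) :
    a⁻¹ * w ∈ sigmaPositive s σ := by
  obtain ⟨_ | ⟨c, cs⟩, hne, rfl⟩ := h
  · exact absurd rfl hne
  · exact inv_mul_foldl_mem_sigmaPositive s σ a c cs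

end ShiftedConj

namespace FreeGroup

variable {α β : Type*}

theorem mulAut_ext {e f : MulAut (FreeGroup α)} (h : ∀ a, e (of a) = f (of a)) : e = f :=
  MulEquiv.toMonoidHom_injective (ext_hom _ _ h)

variable [DecidableEq α]

theorem toWord_mk_of_isReduced {L : List (α × Bool)} (h : IsReduced L) : toWord (mk L) = L := by
  rw [toWord_mk, h.reduce_eq]

theorem toWord_mul_of_isReduced {x y : FreeGroup α} (h : IsReduced (toWord x ++ toWord y)) :
    toWord (x * y) = toWord x ++ toWord y := by
  rw [toWord_mul, h.reduce_eq]

theorem toWord_mul_eq_append {x y : FreeGroup α}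
    (h : ∀ a ∈ (toWord x).getLast?, ∀ b ∈ (toWord y).head?, a.1 = b.1 → a.2 = b.2) :
    toWord (x * y) = toWord x ++ toWord y :=
  toWord_mul_of_isReduced (List.isChain_append.mpr ⟨isReduced_toWord, isReduced_toWord, h⟩)

theorem toWord_mk_singleton_mul {s : α × Bool} {y : FreeGroup α}
    (h : ∀ b ∈ (toWord y).head?, s.1 = b.1 → s.2 = b.2) :
    toWord (mk [s] * y) = s :: toWord y := by
  have hs : toWord (mk [s]) = [s] := toWord_mk_of_isReduced .singleton
  rw [toWord_mul_eq_append (by simpa [hs] using h), hs, List.singleton_append]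

theorem toWord_map [DecidableEq β] {f : α → β} (hf : Function.Injective f) (x : FreeGroup α) :
    toWord (map f x) = (toWord x).map fun p => (f p.1, p.2) := by
  conv_lhs => rw [← mk_toWord (x := x), map.mk]
  refine toWord_mk_of_isReduced ((List.isChain_map _).mpr ?_)
  exact isReduced_toWord.imp fun a b hab h => hab (hf h)

theorem head?_toWord_mul_mk_singleton {x : FreeGroup α} (hx : 2 ≤ (toWord x).length)
    (s : α × Bool) : (toWord (x * mk [s])).head? = (toWord x).head? := by
  obtain ⟨w, t, hw⟩ := (List.eq_nil_or_concat (toWord x)).resolve_left (by grind)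
  rw [List.concat_eq_append] at hw
  have hw₀ : w ≠ [] := by rintro rfl; simp [hw] at hx
  have hred : IsReduced (w ++ [t]) := hw ▸ isReduced_toWord
  have hx' : x * mk [s] = mk (w ++ [t, s]) := by
    rw [← mk_toWord (x := x), hw, mul_mk, List.append_assoc]; rfl
  by_cases hts : t.1 = s.1 ∧ t.2 ≠ s.2
  · have hcancel : mk (w ++ [t, s]) = mk w := by
      obtain ⟨h1, h2⟩ := hts
      obtain ⟨i, b⟩ := t
      obtain ⟨j, c⟩ := s
      obtain rfl : i = j := h1
      obtain rfl : c = !b := by cases b <;> cases c <;> simp_all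
      have h : mk (w ++ (i, b) :: (i, !b) :: []) = mk (w ++ []) := Quot.sound Red.Step.not
      simpa using h
    rw [hx', hcancel, toWord_mk_of_isReduced (hred.infix ⟨[], [t], rfl⟩), hw,
      List.head?_append_of_ne_nil _ hw₀]
  · have hred' : IsReduced (w ++ [t, s]) :=
      List.isChain_append.mpr ⟨hred.infix ⟨[], [t], rfl⟩, List.isChain_pair.mpr (by grind),
        fun a ha b hb => (List.isChain_append.mp hred).2.2 a ha b (by simp_all)⟩
    rw [hx', toWord_mk_of_isReduced hred', hw, List.head?_append_of_ne_nil _ hw₀,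
      List.head?_append_of_ne_nil _ hw₀]

end FreeGroup

namespace ArtinAction

open FreeGroup

def shift : FreeGroup ℕ →* FreeGroup ℕ := map Nat.succ

@[simp] theorem shift_of (i : ℕ) : shift (of i) = of (i + 1) := map.of

theorem toWord_shift (x : FreeGroup ℕ) :
    toWord (shift x) = (toWord x).map fun p => (p.1 + 1, p.2) :=
  toWord_map Nat.succ_injective x

theorem fst_ne_zero_of_mem_toWord_shift {x : FreeGroup ℕ} {q : ℕ × Bool}
    (hq : q ∈ toWord (shift x)) : q.1 ≠ 0 := by
  rw [toWord_shift] at hq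
  obtain ⟨r, -, rfl⟩ := List.mem_map.mp hq
  exact Nat.succ_ne_zero _

theorem exists_eq_shift_mul {g : FreeGroup ℕ} {p : ℕ × Bool} (hp : (toWord g).head? = some p)
    (hp0 : p.1 ≠ 0) : ∃ k g', k ≠ 1 ∧ g = shift k * g' ∧
      (toWord g').length < (toWord g).length ∧ ∀ q ∈ (toWord g').head?, q.1 = 0 := by
  set P : ℕ × Bool → Bool := fun q => q.1 != 0
  set u := (toWord g).takeWhile P
  set v := (toWord g).dropWhile P
  have huv : u ++ v = toWord g := List.takeWhile_append_dropWhile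
  have huv_red : IsReduced (u ++ v) := huv ▸ isReduced_toWord
  have hu : toWord (mk u) = u :=
    toWord_mk_of_isReduced (huv_red.infix (List.prefix_append u v).isInfix)
  have hv : toWord (mk v) = v :=
    toWord_mk_of_isReduced (huv_red.infix (List.suffix_append u v).isInfix)
  have hu₀ : u ≠ [] := by
    obtain ⟨w, hw⟩ := List.head?_eq_some_iff.mp hp
    simp [u, hw, P, hp0]
  set k := mk (u.map fun q => (q.1 - 1, q.2))
  have hshift : shift k = mk u := by
    rw [shift, map.mk, List.map_map]
    conv_rhs => rw [← List.map_id u]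
    refine congrArg mk (List.map_congr_left fun q hq => ?_)
    have : q.1 ≠ 0 := by simpa [P] using List.mem_takeWhile_imp hq
    ext <;> simp; omega
  refine ⟨k, mk v, fun h1 => ?_, toWord_injective ?_, ?_, fun q hq => ?_⟩
  · rw [h1, _root_.map_one, eq_comm, ← toWord_eq_nil_iff, hu] at hshift
    exact hu₀ hshift
  · rw [toWord_mul_of_isReduced (by rwa [hshift, hu, hv]), hshift, hu, hv, huv]
  · rw [hv, ← huv, List.length_append, Nat.lt_add_left_iff_pos, List.length_pos_iff]
    exact hu₀
  · rw [hv, Option.mem_def] at hq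
    have h := List.head?_dropWhile_not P (toWord g)
    rw [show (List.dropWhile P (toWord g)).head? = some q from hq] at h
    simpa [P] using h

def shiftEnd (e : MulAut (FreeGroup ℕ)) : FreeGroup ℕ →* FreeGroup ℕ :=
  FreeGroup.lift fun
    | 0 => of 0
    | i + 1 => shift (e (of i))

@[simp] theorem shiftEnd_of_zero (e : MulAut (FreeGroup ℕ)) : shiftEnd e (of 0) = of 0 := by
  simp [shiftEnd]

@[simp] theorem shiftEnd_of_succ (e : MulAut (FreeGroup ℕ)) (i : ℕ) :
    shiftEnd e (of (i + 1)) = shift (e (of i)) := by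
  simp [shiftEnd]

@[simp] theorem shiftEnd_shift (e : MulAut (FreeGroup ℕ)) (x : FreeGroup ℕ) :
    shiftEnd e (shift x) = shift (e x) :=
  DFunLike.congr_fun (ext_hom ((shiftEnd e).comp shift) (shift.comp e.toMonoidHom) (by simp)) x

theorem shiftEnd_mul (e f : MulAut (FreeGroup ℕ)) :
    shiftEnd (e * f) = (shiftEnd e).comp (shiftEnd f) :=
  ext_hom _ _ fun | 0 => by simp | i + 1 => by simp [MulAut.mul_apply]

theorem shiftEnd_one : shiftEnd 1 = MonoidHom.id (FreeGroup ℕ) :=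
  ext_hom _ _ fun | 0 => by simp | i + 1 => by simp

def shiftAut : MulAut (FreeGroup ℕ) →* MulAut (FreeGroup ℕ) where
  toFun e := (shiftEnd e).toMulEquiv (shiftEnd e⁻¹)
    (by rw [← shiftEnd_mul, inv_mul_cancel, shiftEnd_one])
    (by rw [← shiftEnd_mul, mul_inv_cancel, shiftEnd_one])
  map_one' := MulEquiv.ext fun x => DFunLike.congr_fun shiftEnd_one x
  map_mul' e f := MulEquiv.ext fun x => DFunLike.congr_fun (shiftEnd_mul e f) x

@[simp] theorem shiftAut_apply (e : MulAut (FreeGroup ℕ)) (x : FreeGroup ℕ) :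
    shiftAut e x = shiftEnd e x := rfl

theorem shiftAut_mk_zero (e : MulAut (FreeGroup ℕ)) (c : Bool) :
    shiftAut e (mk [(0, c)]) = mk [(0, c)] := by
  cases c
  · exact congrArg Inv.inv (shiftEnd_of_zero e)
  · exact shiftEnd_of_zero e

theorem head?_toWord_shiftAut_eq_iff (e : MulAut (FreeGroup ℕ)) (g : FreeGroup ℕ) (b : Bool) :
    (toWord (shiftAut e g)).head? = some (0, b) ↔ (toWord g).head? = some (0, b) := by
  induction hn : (toWord g).length using Nat.strong_induction_on generalizing g b with
  | _ n ih =>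
  rcases hg : toWord g with _ | ⟨⟨_ | i, c⟩, w⟩
  · rw [toWord_eq_nil_iff.mp hg]; simp
  · have hred : IsReduced ((0, c) :: w) := hg ▸ isReduced_toWord
    have hw : toWord (mk w) = w := toWord_mk_of_isReduced hred.of_cons
    have hgw : g = mk [(0, c)] * mk w := by rw [mul_mk, List.singleton_append, ← hg, mk_toWord]
    suffices (toWord (shiftAut e g)).head? = some (0, c) by rw [this]; rfl
    rw [hgw, _root_.map_mul, shiftAut_mk_zero, toWord_mk_singleton_mul]
    · rfl
    rintro ⟨_, d⟩ hd (rfl : 0 = _)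
    have hwd := (ih _ (by rw [hw, ← hn, hg]; simp) (mk w) d rfl).mp hd
    rw [hw] at hwd
    obtain ⟨w', rfl⟩ := List.head?_eq_some_iff.mp hwd
    exact (isReduced_cons_cons.mp hred).1 rfl
  · obtain ⟨k, g', hk, rfl, hlen, hg'⟩ :=
      exists_eq_shift_mul (by rw [hg]; rfl) (Nat.succ_ne_zero i)
    have hne : toWord (shift (e k)) ≠ [] := by
      rw [toWord_shift, Ne, List.map_eq_nil_iff, toWord_eq_nil_iff]
      exact (map_ne_one_iff e e.injective).mpr hk
    have hg'e : ∀ q ∈ (toWord (shiftAut e g')).head?, q.1 = 0 := by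
      rcases hh : (toWord g').head? with _ | ⟨j, d⟩
      · rw [List.head?_eq_none_iff, toWord_eq_nil_iff] at hh
        simp [hh]
      · obtain rfl : j = 0 := hg' _ hh
        rw [(ih _ (hn ▸ hlen) g' d rfl).mpr hh]
        simp
    have key : toWord (shiftAut e (shift k * g')) =
        toWord (shift (e k)) ++ toWord (shiftAut e g') := by
      rw [_root_.map_mul, shiftAut_apply e (shift k), shiftEnd_shift]
      exact toWord_mul_eq_append fun a ha q hq hidx =>
        (fst_ne_zero_of_mem_toWord_shift (List.mem_of_getLast? ha) (hidx.trans (hg'e q hq))).elim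
    rw [key, List.head?_append_of_ne_nil _ hne]
    exact iff_of_false (fun h => fst_ne_zero_of_mem_toWord_shift (List.mem_of_mem_head? h) rfl)
      (by simp)

def swap01 : MulAut (FreeGroup ℕ) := freeGroupCongr (Equiv.swap 0 1)

/-- The first Artin generator, written through a shifted automorphism so that its effect on first
letters of reduced words follows from `head?_toWord_shiftAut_eq_iff`. -/
def sigma : MulAut (FreeGroup ℕ) :=
  MulAut.conj (of 0) * swap01 * shiftAut (MulAut.conj (of 0)⁻¹)

@[simp] theorem sigma_of_zero : sigma (of 0) = of 0 * of 1 * (of 0)⁻¹ := by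
  simp only [sigma, MulAut.mul_apply, shiftAut_apply]; simp [swap01]

@[simp] theorem sigma_of_one : sigma (of 1) = of 0 := by
  simp only [sigma, MulAut.mul_apply, shiftAut_apply]; simp [swap01]

@[simp] theorem sigma_of_add_two (i : ℕ) : sigma (of (i + 2)) = of (i + 2) := by
  simp only [sigma, MulAut.mul_apply, shiftAut_apply]
  simp [swap01, Equiv.swap_apply_of_ne_of_ne, mul_assoc]

theorem sigma_shift_shift (x : FreeGroup ℕ) : sigma (shift (shift x)) = shift (shift x) :=
  DFunLike.congr_fun (ext_hom (sigma.toMonoidHom.comp (shift.comp shift)) (shift.comp shift)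
    (by simp)) x

theorem sigma_commute_shiftAut_shiftAut (z : MulAut (FreeGroup ℕ)) :
    Commute sigma (shiftAut (shiftAut z)) :=
  mulAut_ext fun
    | 0 => by simp [MulAut.mul_apply]
    | 1 => by simp [MulAut.mul_apply]
    | i + 2 => by simp [MulAut.mul_apply, sigma_shift_shift]

theorem sigma_braid :
    sigma * shiftAut sigma * sigma = shiftAut sigma * sigma * shiftAut sigma :=
  mulAut_ext fun
    | 0 => by simp [MulAut.mul_apply]; group
    | 1 => by simp [MulAut.mul_apply]
    | 2 => by simp [MulAut.mul_apply]
    | i + 3 => by simp [MulAut.mul_apply]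

theorem head?_toWord_sigma {g : FreeGroup ℕ} {b : Bool} (hg : (toWord g).head? = some (0, b)) :
    (toWord (sigma g)).head? = some (0, true) := by
  set v := swap01 (shiftAut (MulAut.conj (of 0)⁻¹) g)
  have hv : (toWord v).head? = some (1, b) := by
    rw [show v = map (Equiv.swap 0 1) _ from rfl, toWord_map (Equiv.injective _), List.head?_map,
      (head?_toWord_shiftAut_eq_iff _ g b).mpr hg]
    simp
  obtain ⟨w, hw⟩ := List.head?_eq_some_iff.mp hv
  have hv' : toWord (mk [(0, true)] * v) = (0, true) :: (1, b) :: w := by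
    rw [toWord_mk_singleton_mul (by simp [hw]), hw]
  have hsigma : sigma g = mk [(0, true)] * v * mk [(0, false)] := rfl
  rw [hsigma, head?_toWord_mul_mk_singleton (by simp [hv']), hv']
  rfl

theorem head?_toWord_eq_of_mem_sigmaPositive {γ : MulAut (FreeGroup ℕ)}
    (hγ : γ ∈ sigmaPositive shiftAut sigma) {g : FreeGroup ℕ} {b : Bool}
    (hg : (toWord g).head? = some (0, b)) : (toWord (γ g)).head? = some (0, true) := by
  induction hγ using Subsemigroup.closure_induction generalizing g b with
  | mem γ hγ =>
    obtain ⟨e, f, rfl⟩ := hγ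
    rw [MulAut.mul_apply, MulAut.mul_apply, head?_toWord_shiftAut_eq_iff]
    exact head?_toWord_sigma ((head?_toWord_shiftAut_eq_iff f g b).mpr hg)
  | mul γ δ _ _ hγ hδ => exact hγ (hδ hg)

theorem one_notMem_sigmaPositive :
    (1 : MulAut (FreeGroup ℕ)) ∉ sigmaPositive shiftAut sigma := by
  intro h
  have hx : toWord (of 0 : FreeGroup ℕ)⁻¹ = [(0, false)] := by rw [toWord_inv, toWord_of]; rfl
  have := head?_toWord_eq_of_mem_sigmaPositive h (g := (of 0)⁻¹) (b := false) (by rw [hx]; rfl)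
  rw [MulAut.one_apply, hx] at this
  simp at this

end ArtinAction

theorem ltL_irrefl (a : FreeLD) : ¬ LtL FreeLD.mul a a := by
  intro h
  have hld := shiftedConj_left_distrib ArtinAction.shiftAut ArtinAction.sigma
    ArtinAction.sigma_commute_shiftAut_shiftAut ArtinAction.sigma_braid
  have hpos := (h.map (FreeLD.lift 1 hld) (FreeLD.lift_mul 1 hld)).inv_mul_mem_sigmaPositive
  rw [inv_mul_cancel] at hpos
  exact ArtinAction.one_notMem_sigmaPositive hpos
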